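/- Let d ≥ 2 be an even integer and ω = e^{2πi/(d+1)}. With e_{k,n} and e′_{k,n} the k-th elementary symmetric polynomials evaluated at the first n terms of the sequences L(1) = 1, L(2j) = ω^{−j}, L(2j+1) = ω^{j} and L′(1) = 1, L′(2j) = ω^{j}, L′(2j+1) = ω^{−j} respectively, it holds that e′_{d+1−k,d} = −e_{k,d} for every k with 1 ≤ k ≤ d. -/

import Mathlib

/-- `ω = e^{2πi/(d+1)}`. -/
noncomputable def omC (d : ℕ) : ℂ := Complex.exp (2 * Real.pi * Complex.I / ((d : ℂ) + 1))

/-- The sequence `L(1) = 1`, `L(2j) = ω^{-j}`, `L(2j+1) = ω^j` (1-based argument). -/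
noncomputable def Lseq (d : ℕ) (m : ℕ) : ℂ :=
  if m % 2 = 0 then (omC d ^ (m / 2))⁻¹ else omC d ^ (m / 2)

/-- The sequence `L'(1) = 1`, `L'(2j) = ω^{j}`, `L'(2j+1) = ω^{-j}`. -/
noncomputable def Lseq' (d : ℕ) (m : ℕ) : ℂ :=
  if m % 2 = 0 then omC d ^ (m / 2) else (omC d ^ (m / 2))⁻¹

/-- `k`-th elementary symmetric polynomial evaluated at the first `n` terms of `f`. -/
noncomputable def esymSeq (f : ℕ → ℂ) (n k : ℕ) : ℂ :=
  ∑ A ∈ Finset.powersetCard k (Finset.Icc 1 n), ∏ i ∈ A, f i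

/-!
Write `d = 2n` and `a = ω^n`. The values `L(1), …, L(d)` are `ω^j` for `-n ≤ j < n`: all
`(d+1)`-st roots of unity except `a`. The elementary symmetric functions of all the roots vanish in
degrees `1, …, d` (Vieta for `X^(d+1) - 1`), so peeling off the root `a` gives `e_{k,d} = (-a)^k`
by induction on `k`. Since `L' = L⁻¹`, also `e'_{k,d} = (-a⁻¹)^k`, and `(-a)^(d+1) = -1` turns
`e'_{d+1-k,d}` into `-e_{k,d}`.
-/

open Polynomial

namespace Multiset

variable {R : Type*} [CommRing R]

theorem esymm_cons_succ (a : R) (s : Multiset R) (k : ℕ) :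
    (a ::ₘ s).esymm (k + 1) = s.esymm (k + 1) + a * s.esymm k := by
  simp only [esymm, powersetCard_cons, map_add, sum_add, map_map, Function.comp_def, prod_cons,
    sum_map_mul_left]

theorem esymm_eq_neg_pow_of_esymm_cons_eq_zero {a : R} {s : Multiset R} {n : ℕ}
    (h : ∀ k, 0 < k → k ≤ n → (a ::ₘ s).esymm k = 0) {k : ℕ} (hk : k ≤ n) :
    s.esymm k = (-a) ^ k := by
  induction k with
  | zero => simp [esymm]
  | succ k ih =>
    have hcons := h (k + 1) k.succ_pos hk
    rw [esymm_cons_succ, ih (by omega)] at hcons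
    linear_combination hcons

end Multiset

theorem IsPrimitiveRoot.esymm_nthRoots_one_eq_zero {R : Type*} [CommRing R] [IsDomain R]
    {ζ : R} {N : ℕ} (hζ : IsPrimitiveRoot ζ N) {k : ℕ} (hk0 : 0 < k) (hkN : k < N) :
    (nthRoots N (1 : R)).esymm k = 0 := by
  have hvieta := coeff_eq_esymm_roots_of_card (p := (X ^ N - C 1 : R[X]))
    (by rw [natDegree_X_pow_sub_C, ← nthRoots, hζ.card_nthRoots_one]) (k := N - k)
    (by rw [natDegree_X_pow_sub_C]; omega)
  rw [natDegree_X_pow_sub_C, leadingCoeff_X_pow_sub_C (by omega), ← nthRoots,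
    Nat.sub_sub_self hkN.le] at hvieta
  have hcoeff : (X ^ N - C (1 : R)).coeff (N - k) = 0 := by
    rw [coeff_sub, coeff_X_pow, coeff_C, if_neg (by omega), if_neg (by omega), sub_zero]
  rw [hcoeff, one_mul] at hvieta
  simpa using hvieta.symm

section AltPow

variable {K : Type*} [Field K]

def altPow (ζ : K) (m : ℕ) : K :=
  if m % 2 = 0 then (ζ ^ (m / 2))⁻¹ else ζ ^ (m / 2)

def altExp (n m : ℕ) : ℕ :=
  if m % 2 = 0 then 2 * n + 1 - m / 2 else m / 2

theorem altPow_eq_pow_altExp {ζ : K} {n m : ℕ} (hζ : ζ ^ (2 * n + 1) = 1) (hm : m ≤ 2 * n) :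
    altPow ζ m = ζ ^ altExp n m := by
  unfold altPow altExp
  split_ifs
  · exact inv_eq_of_mul_eq_one_left (by rw [← pow_add, Nat.sub_add_cancel (by omega), hζ])
  · rfl

theorem cons_map_altExp_Icc (n : ℕ) :
    n ::ₘ (Finset.Icc 1 (2 * n)).val.map (altExp n) = Multiset.range (2 * n + 1) := by
  have hnodup : (n ::ₘ (Finset.Icc 1 (2 * n)).val.map (altExp n)).Nodup := by
    refine Multiset.nodup_cons.2 ⟨?_, Multiset.Nodup.map_on ?_ (Finset.nodup _)⟩
    · simp only [Multiset.mem_map, Finset.mem_val, Finset.mem_Icc, altExp, not_exists, not_and]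
      intro m hm
      split_ifs <;> omega
    · simp only [Finset.mem_val, Finset.mem_Icc, altExp]
      intro x hx y hy
      split_ifs <;> omega
  refine Multiset.eq_of_le_of_card_le ((Multiset.le_iff_subset hnodup).2 ?_) (by simp)
  intro x hx
  simp only [Multiset.mem_cons, Multiset.mem_map, Finset.mem_val, Finset.mem_Icc] at hx
  rw [Multiset.mem_range]
  rcases hx with rfl | ⟨m, hm, rfl⟩
  · omega
  · unfold altExp; split_ifs <;> omega

theorem IsPrimitiveRoot.cons_map_altPow_Icc {ζ : K} {n : ℕ} (hζ : IsPrimitiveRoot ζ (2 * n + 1)) :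
    ζ ^ n ::ₘ (Finset.Icc 1 (2 * n)).val.map (altPow ζ) = nthRoots (2 * n + 1) (1 : K) := by
  have hpow : ∀ m ∈ (Finset.Icc 1 (2 * n)).val, altPow ζ m = ζ ^ altExp n m := fun m hm =>
    altPow_eq_pow_altExp hζ.pow_eq_one (Finset.mem_Icc.1 hm).2
  rw [hζ.nthRoots_eq (one_pow _), ← cons_map_altExp_Icc, Multiset.map_congr rfl hpow]
  simp [Multiset.map_map]

theorem IsPrimitiveRoot.esymm_map_altPow_Icc {ζ : K} {n : ℕ} (hζ : IsPrimitiveRoot ζ (2 * n + 1))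
    {k : ℕ} (hk : k ≤ 2 * n) :
    ((Finset.Icc 1 (2 * n)).val.map (altPow ζ)).esymm k = (-ζ ^ n) ^ k :=
  Multiset.esymm_eq_neg_pow_of_esymm_cons_eq_zero (fun _ hk0 hkn => by
    rw [hζ.cons_map_altPow_Icc]; exact hζ.esymm_nthRoots_one_eq_zero hk0 (by omega)) hk

end AltPow

theorem esymSeq_eq_esymm (f : ℕ → ℂ) (n k : ℕ) :
    esymSeq f n k = ((Finset.Icc 1 n).val.map f).esymm k := by
  rw [Finset.esymm_map_val]; rfl

theorem isPrimitiveRoot_omC (d : ℕ) : IsPrimitiveRoot (omC d) (d + 1) := by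
  simpa [omC] using Complex.isPrimitiveRoot_exp (d + 1) d.succ_ne_zero

theorem Lseq_eq_altPow (d : ℕ) : Lseq d = altPow (omC d) := rfl

theorem Lseq'_eq_altPow_inv (d : ℕ) : Lseq' d = altPow (omC d)⁻¹ := by
  funext m
  simp only [Lseq', altPow, inv_pow, inv_inv]

theorem inv_pow_sub_eq_neg_pow {D : Type*} [DivisionRing D] {a : D} {N k : ℕ} (ha : a ^ N = -1)
    (hk : k ≤ N) : a⁻¹ ^ (N - k) = -a ^ k := by
  rw [inv_pow]
  exact inv_eq_of_mul_eq_one_right (by rw [mul_neg, pow_sub_mul_pow a hk, ha, neg_neg])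

theorem stmt14_general (d : ℕ) (hdeven : d % 2 = 0) (k : ℕ) (hk1 : 1 ≤ k) (hkd : k ≤ d) :
    esymSeq (Lseq' d) d (d + 1 - k) = -esymSeq (Lseq d) d k := by
  obtain ⟨n, rfl⟩ : ∃ n, d = 2 * n := ⟨d / 2, by omega⟩
  have hω := isPrimitiveRoot_omC (2 * n)
  have hodd : (-omC (2 * n) ^ n) ^ (2 * n + 1) = -1 := by
    rw [Odd.neg_pow ⟨n, rfl⟩, ← pow_mul, pow_mul', hω.pow_eq_one, one_pow]
  rw [esymSeq_eq_esymm, esymSeq_eq_esymm, Lseq_eq_altPow, Lseq'_eq_altPow_inv,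
    hω.inv.esymm_map_altPow_Icc (by omega), hω.esymm_map_altPow_Icc hkd, inv_pow, neg_inv]
  exact inv_pow_sub_eq_neg_pow hodd (by omega)

/-- For `d` even and `1 ≤ k ≤ d`: `e'_{d+1-k,d} = -e_{k,d}`. -/
theorem stmt14 (d : ℕ) (hd : 2 ≤ d) (hdeven : d % 2 = 0) (k : ℕ) (hk1 : 1 ≤ k) (hkd : k ≤ d) :
    esymSeq (Lseq' d) d (d + 1 - k) = -esymSeq (Lseq d) d k :=
  stmt14_general d hdeven k hk1 hkd
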